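/- arXiv:1506.07666 — 6 statements merged into one kernel-verified Lean document; each statement's English description precedes it below -/
import Mathlib

section
/- Let G₀ ← G₁ ← G₂ ← ⋯ be a graph covering (a sequence of covers φₙ : Gₙ₊₁ → Gₙ between surjective finite directed graphs, with G₀ the singleton graph with a loop). Then the inverse-limit relation E_𝒢 on the inverse-limit vertex set V_𝒢 is the graph of a function: for each x ∈ V_𝒢 there is exactly one y ∈ V_𝒢 with (x,y) ∈ E_𝒢. -/
/-- In the inverse limit of a graph covering, the relation `E_𝒢` is the graph of a
function: each point has exactly one successor. -/
theorem invLimit_exists_unique_succ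
    (V : ℕ → Type) [∀ n, Fintype (V n)] [∀ n, Nonempty (V n)]
    (E : ∀ n, Set (V n × V n)) (φ : ∀ n, V (n + 1) → V n)
    (h0 : ∀ a b : V 0, a = b) (hloop : ∀ v : V 0, (v, v) ∈ E 0)
    (hsurj : ∀ n (v : V n), (∃ u, (u, v) ∈ E n) ∧ ∃ w, (v, w) ∈ E n)
    (hhom : ∀ n (u v : V (n + 1)), (u, v) ∈ E (n + 1) → (φ n u, φ n v) ∈ E n)
    (hp : ∀ n (u v v' : V (n + 1)),
      (u, v) ∈ E (n + 1) → (u, v') ∈ E (n + 1) → φ n v = φ n v')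
    (hes : ∀ n (a b : V n), (a, b) ∈ E n →
      ∃ u v : V (n + 1), (u, v) ∈ E (n + 1) ∧ φ n u = a ∧ φ n v = b) :
    ∀ x : {x : ∀ n, V n // ∀ n, φ n (x (n + 1)) = x n},
      ∃! y : {x : ∀ n, V n // ∀ n, φ n (x (n + 1)) = x n},
        ∀ n, (x.1 n, y.1 n) ∈ E n := by
  intro x
  -- choose a successor of x (n+1) at each level
  have hw : ∀ n, ∃ w, (x.1 (n + 1), w) ∈ E (n + 1) := fun n => (hsurj (n + 1) (x.1 (n + 1))).2
  choose w hwE using hw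
  refine ⟨⟨fun n => φ n (w n), ?_⟩, ?_, ?_⟩
  · intro n
    -- φ (n+1) (w (n+1)) is a successor of x (n+1), as is w n
    have h1 : (x.1 (n + 1), φ (n + 1) (w (n + 1))) ∈ E (n + 1) := by
      have := hhom (n + 1) (x.1 (n + 2)) (w (n + 1)) (hwE (n + 1))
      rwa [x.2 (n + 1)] at this
    exact hp n _ _ _ h1 (hwE n)
  · intro n
    have := hhom n (x.1 (n + 1)) (w n) (hwE n)
    rwa [x.2 n] at this
  · rintro ⟨y, hy⟩ hyE
    refine Subtype.ext (funext fun n => ?_)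
    have h1 : (x.1 (n + 1), y (n + 1)) ∈ E (n + 1) := hyE (n + 1)
    have := hp n _ _ _ h1 (hwE n)
    simpa [hy n] using this
end

section
/- With the setup of a graph covering by covers φₙ : Gₙ₊₁ → Gₙ, the induced map E_𝒢 : V_𝒢 → V_𝒢 is surjective. -/
/-!
The predecessors of `y n` in `Gₙ` form a nonempty finite set, and since every `φₙ` is a graph
homomorphism and `y` is a thread, `φₙ` maps the predecessors of `y (n + 1)` to predecessors of
`y n`. König's lemma then yields a thread of predecessors, i.e. a point `x` with `E_𝒢 x = y`.
-/

open CategoryTheory Set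

universe u

theorem exists_compatible_seq_of_finite {S : ℕ → Type u} [∀ n, Finite (S n)]
    [∀ n, Nonempty (S n)] (f : ∀ n, S (n + 1) → S n) :
    ∃ x : ∀ n, S n, ∀ n, f n (x (n + 1)) = x n := by
  let F : ℕᵒᵖ ⥤ Type u := Functor.ofOpSequence fun n => TypeCat.ofHom (f n)
  have : ∀ j : ℕᵒᵖ, Finite (F.obj j) := fun j => inferInstanceAs (Finite (S j.unop))
  have : ∀ j : ℕᵒᵖ, Nonempty (F.obj j) := fun j => inferInstanceAs (Nonempty (S j.unop))
  obtain ⟨x, hx⟩ := nonempty_sections_of_finite_inverse_system F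
  refine ⟨fun n => x ⟨n⟩, fun n => ?_⟩
  have hxn := hx (homOfLE n.le_succ).op
  rwa [Functor.ofOpSequence_map_homOfLE_succ] at hxn

theorem exists_compatible_seq_mem_of_mapsTo {S : ℕ → Type u} [∀ n, Finite (S n)]
    (f : ∀ n, S (n + 1) → S n) {P : ∀ n, Set (S n)} (hP : ∀ n, (P n).Nonempty)
    (hf : ∀ n, MapsTo (f n) (P (n + 1)) (P n)) :
    ∃ x : ∀ n, S n, (∀ n, f n (x (n + 1)) = x n) ∧ ∀ n, x n ∈ P n := by
  have : ∀ n, Nonempty (P n) := fun n => (hP n).to_subtype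
  obtain ⟨x, hx⟩ := exists_compatible_seq_of_finite (S := fun n => P n) fun n => (hf n).restrict
  exact ⟨fun n => x n, fun n => congrArg Subtype.val (hx n), fun n => (x n).2⟩

theorem invLimit_surjective_general
    (V : ℕ → Type) [∀ n, Fintype (V n)]
    (E : ∀ n, Set (V n × V n)) (φ : ∀ n, V (n + 1) → V n)
    (hsurj : ∀ n (v : V n), (∃ u, (u, v) ∈ E n) ∧ ∃ w, (v, w) ∈ E n)
    (hhom : ∀ n (u v : V (n + 1)), (u, v) ∈ E (n + 1) → (φ n u, φ n v) ∈ E n) :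
    ∀ y : {x : ∀ n, V n // ∀ n, φ n (x (n + 1)) = x n},
      ∃ x : {x : ∀ n, V n // ∀ n, φ n (x (n + 1)) = x n},
        ∀ n, (x.1 n, y.1 n) ∈ E n := by
  rintro ⟨y, hy⟩
  have hpred : ∀ n, MapsTo (φ n) {u | (u, y (n + 1)) ∈ E (n + 1)} {u | (u, y n) ∈ E n} :=
    fun n u hu => hy n ▸ hhom n u (y (n + 1)) hu
  obtain ⟨x, hx, hxy⟩ :=
    exists_compatible_seq_mem_of_mapsTo φ (fun n => (hsurj n (y n)).1) hpred
  exact ⟨⟨x, hx⟩, hxy⟩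

/-- In the inverse limit of a graph covering, the induced map `E_𝒢` is surjective:
every point has a predecessor. -/
theorem invLimit_surjective
    (V : ℕ → Type) [∀ n, Fintype (V n)] [∀ n, Nonempty (V n)]
    (E : ∀ n, Set (V n × V n)) (φ : ∀ n, V (n + 1) → V n)
    (h0 : ∀ a b : V 0, a = b) (hloop : ∀ v : V 0, (v, v) ∈ E 0)
    (hsurj : ∀ n (v : V n), (∃ u, (u, v) ∈ E n) ∧ ∃ w, (v, w) ∈ E n)
    (hhom : ∀ n (u v : V (n + 1)), (u, v) ∈ E (n + 1) → (φ n u, φ n v) ∈ E n)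
    (hp : ∀ n (u v v' : V (n + 1)),
      (u, v) ∈ E (n + 1) → (u, v') ∈ E (n + 1) → φ n v = φ n v')
    (hes : ∀ n (a b : V n), (a, b) ∈ E n →
      ∃ u v : V (n + 1), (u, v) ∈ E (n + 1) ∧ φ n u = a ∧ φ n v = b) :
    ∀ y : {x : ∀ n, V n // ∀ n, φ n (x (n + 1)) = x n},
      ∃ x : {x : ∀ n, V n // ∀ n, φ n (x (n + 1)) = x n},
        ∀ n, (x.1 n, y.1 n) ∈ E n :=
  invLimit_surjective_general V E φ hsurj hhom
end

section
/- If in a graph covering all covers φₙ are bidirectional, then the inverse-limit map E_𝒢 : V_𝒢 → V_𝒢 is injective (hence a homeomorphism of the compact space V_𝒢). -/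
/-- If all covers in a graph covering are bidirectional, then the inverse-limit map
`E_𝒢` is injective, hence a homeomorphism of the compact space `V_𝒢`. -/
theorem invLimit_injective_of_bidirectional
    (V : ℕ → Type) [∀ n, Fintype (V n)] [∀ n, Nonempty (V n)]
    [∀ n, TopologicalSpace (V n)] [∀ n, DiscreteTopology (V n)]
    (E : ∀ n, Set (V n × V n)) (φ : ∀ n, V (n + 1) → V n)
    (h0 : ∀ a b : V 0, a = b) (hloop : ∀ v : V 0, (v, v) ∈ E 0)
    (hsurj : ∀ n (v : V n), (∃ u, (u, v) ∈ E n) ∧ ∃ w, (v, w) ∈ E n)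
    (hhom : ∀ n (u v : V (n + 1)), (u, v) ∈ E (n + 1) → (φ n u, φ n v) ∈ E n)
    (hp : ∀ n (u v v' : V (n + 1)),
      (u, v) ∈ E (n + 1) → (u, v') ∈ E (n + 1) → φ n v = φ n v')
    (hm : ∀ n (u u' v : V (n + 1)),
      (u, v) ∈ E (n + 1) → (u', v) ∈ E (n + 1) → φ n u = φ n u')
    (hes : ∀ n (a b : V n), (a, b) ∈ E n →
      ∃ u v : V (n + 1), (u, v) ∈ E (n + 1) ∧ φ n u = a ∧ φ n v = b)
    (F : {x : ∀ n, V n // ∀ n, φ n (x (n + 1)) = x n} →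
         {x : ∀ n, V n // ∀ n, φ n (x (n + 1)) = x n})
    (hF : ∀ x n, (x.1 n, (F x).1 n) ∈ E n) :
    Function.Injective F ∧ IsHomeomorph F := by
  classical
  -- key: the n-th coordinate of `F x` depends only on the (n+1)-st coordinate of `x`
  have key : ∀ (x y : {x : ∀ n, V n // ∀ n, φ n (x (n + 1)) = x n}) (n : ℕ),
      x.1 (n + 1) = y.1 (n + 1) → (F x).1 n = (F y).1 n := by
    intro x y n h
    have hx := hF x (n + 1)
    have hy := hF y (n + 1)
    rw [h] at hx
    have h2 := hp n _ _ _ hx hy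
    rw [(F x).2 n, (F y).2 n] at h2
    exact h2
  -- injectivity
  have hinj : Function.Injective F := by
    intro x y hxy
    apply Subtype.ext; funext n
    have hx := hF x (n + 1)
    have hy := hF y (n + 1)
    rw [hxy] at hx
    have h2 := hm n _ _ _ hx hy
    rw [x.2 n, y.2 n] at h2
    exact h2
  -- surjectivity
  have hsurjF : Function.Surjective F := by
    intro z
    have hex : ∀ n, ∃ u : V (n + 1), (u, z.1 (n + 1)) ∈ E (n + 1) :=
      fun n => (hsurj (n + 1) (z.1 (n + 1))).1
    choose u hu using hex
    have hcompat : ∀ n, φ n (φ (n + 1) (u (n + 1))) = φ n (u n) := by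
      intro n
      have h1 : (φ (n + 1) (u (n + 1)), z.1 (n + 1)) ∈ E (n + 1) := by
        have := hhom (n + 1) _ _ (hu (n + 1))
        rwa [z.2 (n + 1)] at this
      exact hm n _ _ _ h1 (hu n)
    refine ⟨⟨fun n => φ n (u n), hcompat⟩, ?_⟩
    apply Subtype.ext; funext n
    set x : {x : ∀ n, V n // ∀ n, φ n (x (n + 1)) = x n} := ⟨fun n => φ n (u n), hcompat⟩
    have hx : (x.1 (n + 1), z.1 (n + 1)) ∈ E (n + 1) := by
      have := hhom (n + 1) _ _ (hu (n + 1))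
      rwa [z.2 (n + 1)] at this
    have hFx := hF x (n + 1)
    have h2 := hp n _ _ _ hFx hx
    rw [(F x).2 n, z.2 n] at h2
    exact h2
  -- continuity
  have hcont : Continuous F := by
    rw [continuous_induced_rng]
    apply continuous_pi
    intro n
    apply IsLocallyConstant.continuous
    rw [IsLocallyConstant.iff_exists_open]
    intro x
    refine ⟨{y | y.1 (n + 1) = x.1 (n + 1)}, ?_, rfl, fun y hy => key y x n hy⟩
    exact ((continuous_apply (n + 1)).comp continuous_subtype_val).isOpen_preimage
      {x.1 (n + 1)} (isOpen_discrete _)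
  -- compactness of the inverse limit
  have hclosed : IsClosed {x : ∀ n, V n | ∀ n, φ n (x (n + 1)) = x n} := by
    have heq : {x : ∀ n, V n | ∀ n, φ n (x (n + 1)) = x n}
        = ⋂ n, {x : ∀ n, V n | φ n (x (n + 1)) = x n} := by
      ext x; simp [Set.mem_iInter]
    rw [heq]
    exact isClosed_iInter fun n => isClosed_eq
      ((continuous_of_discreteTopology).comp (continuous_apply (n + 1)))
      (continuous_apply n)
  haveI : CompactSpace {x : ∀ n, V n // ∀ n, φ n (x (n + 1)) = x n} :=
    isCompact_iff_compactSpace.mp hclosed.isCompact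
  exact ⟨hinj, isHomeomorph_iff_continuous_bijective.mpr ⟨hcont, hinj, hsurjF⟩⟩
end

section
/- Let G₀ ← G₁ ← ⋯ be a KR-covering (each Gₙ a generalized figure-8 with central vertex vₙ,₀ and φₙ(vₙ₊₁,₀) = vₙ,₀) of rank K with inverse limit (X,f). Set x₀ := (v₀, v₁,₀, v₂,₀, …). Then for every x ∈ X with x ≠ x₀, the fiber f⁻¹(x) is a singleton. -/
/-- Iterated bonding map downwards in an inverse system. -/
def downMap {V : ℕ → Type} (φ : ∀ n, V (n + 1) → V n) : ∀ n m, m ≤ n → V n → V m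
  | 0, m, h, v => cast (congrArg V (Nat.le_zero.mp h)).symm v
  | n + 1, m, h, v =>
    if hm : m = n + 1 then cast (congrArg V hm).symm v
    else downMap φ n m (by omega) (φ n v)

theorem downMap_self {V : ℕ → Type} (φ : ∀ n, V (n + 1) → V n) (n : ℕ)
    (h : n ≤ n) (v : V n) : downMap φ n n h v = v := by
  cases n <;> simp [downMap]

theorem downMap_step {V : ℕ → Type} (φ : ∀ n, V (n + 1) → V n) (n m : ℕ)
    (h : m ≤ n) (h2 : m ≤ n + 1) (v : V (n + 1)) :
    downMap φ (n + 1) m h2 v = downMap φ n m h (φ n v) := by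
  have hm : m ≠ n + 1 := by omega
  simp [downMap, hm]

theorem downMap_comm {V : ℕ → Type} (φ : ∀ n, V (n + 1) → V n) (n m : ℕ)
    (h : m + 1 ≤ n) (h2 : m ≤ n) (v : V n) :
    φ m (downMap φ n (m + 1) h v) = downMap φ n m h2 v := by
  induction n with
  | zero => omega
  | succ k ih =>
    by_cases hm : m = k
    · subst hm
      rw [downMap_self, downMap_step φ m m le_rfl, downMap_self]
    · have h' : m + 1 ≤ k := by omega
      rw [downMap_step φ k (m + 1) h', downMap_step φ k m (by omega), ih h' (by omega)]


/-- A generalized figure-8: a finite directed graph consisting of a unique central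
vertex together with finitely many circuits through it, pairwise intersecting only
in the central vertex, whose edges exhaust the graph. -/
structure GenFig8 (V : Type) (E : Set (V × V)) where
  center : V
  l : ℕ
  len : Fin l → ℕ
  circ : Fin l → ℕ → V
  len_pos : ∀ i, 0 < len i
  start : ∀ i, circ i 0 = center
  close : ∀ i, circ i (len i) = center
  edges : ∀ i j, j < len i → (circ i j, circ i (j + 1)) ∈ E
  inj : ∀ i, ∀ j < len i, ∀ j' < len i, circ i j = circ i j' → j = j'
  cover : ∀ e ∈ E, ∃ i j, j < len i ∧ e = (circ i j, circ i (j + 1))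
  disj : ∀ i i', i ≠ i' → ∀ j < len i, ∀ j' < len i',
    circ i j = circ i' j' → circ i j = center

/-- In the inverse limit `(X, f)` of a KR-covering, every point other than the
sequence `x₀` of central vertices has a singleton fiber under `f`. -/
theorem kr_covering_fiber_singleton
    (V : ℕ → Type) [∀ n, Fintype (V n)] [∀ n, Nonempty (V n)]
    (E : ∀ n, Set (V n × V n)) (φ : ∀ n, V (n + 1) → V n)
    (h0 : ∀ a b : V 0, a = b) (hloop : ∀ v : V 0, (v, v) ∈ E 0)
    (hsurj : ∀ n (v : V n), (∃ u, (u, v) ∈ E n) ∧ ∃ w, (v, w) ∈ E n)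
    (hhom : ∀ n (u v : V (n + 1)), (u, v) ∈ E (n + 1) → (φ n u, φ n v) ∈ E n)
    (hp : ∀ n (u v v' : V (n + 1)),
      (u, v) ∈ E (n + 1) → (u, v') ∈ E (n + 1) → φ n v = φ n v')
    (hes : ∀ n (a b : V n), (a, b) ∈ E n →
      ∃ u v : V (n + 1), (u, v) ∈ E (n + 1) ∧ φ n u = a ∧ φ n v = b)
    (Fig : ∀ n, GenFig8 (V (n + 1)) (E (n + 1)))
    (hcenter : ∀ n, φ (n + 1) (Fig (n + 1)).center = (Fig n).center)
    (x₀ : {x : ∀ n, V n // ∀ n, φ n (x (n + 1)) = x n})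
    (hx₀ : ∀ n, x₀.1 (n + 1) = (Fig n).center) :
    ∀ x : {x : ∀ n, V n // ∀ n, φ n (x (n + 1)) = x n}, x ≠ x₀ →
      ∃! y : {x : ∀ n, V n // ∀ n, φ n (x (n + 1)) = x n},
        ∀ n, (y.1 n, x.1 n) ∈ E n := by
  intro x hx
  -- x differs from x₀ at some index, necessarily positive
  have hex : ∃ n, x.1 n ≠ x₀.1 n := by
    by_contra h
    push_neg at h
    exact hx (Subtype.ext (funext h))
  obtain ⟨n₁, hn₁⟩ := hex
  obtain ⟨M, rfl⟩ : ∃ m, n₁ = m + 1 := by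
    rcases n₁ with _ | m
    · exact absurd (h0 _ _) hn₁
    · exact ⟨m, rfl⟩
  have hM : x.1 (M + 1) ≠ (Fig M).center := by
    rw [← hx₀ M]; exact hn₁
  -- noncentrality propagates upwards
  have hnc : ∀ m, M ≤ m → x.1 (m + 1) ≠ (Fig m).center := by
    intro m hm
    induction m, hm using Nat.le_induction with
    | base => exact hM
    | succ k hk ih =>
      intro h
      apply ih
      rw [← x.2 (k + 1), h, hcenter k]
  -- uniqueness of predecessors of non-central vertices
  have pu : ∀ m (v : V (m + 1)), v ≠ (Fig m).center →
      ∀ u u', (u, v) ∈ E (m + 1) → (u', v) ∈ E (m + 1) → u = u' := by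
    intro m v hv u u' hu hu'
    obtain ⟨i, j, hj, he⟩ := (Fig m).cover _ hu
    obtain ⟨i', j', hj', he'⟩ := (Fig m).cover _ hu'
    have hu1 : u = (Fig m).circ i j := congrArg Prod.fst he
    have hv1 : v = (Fig m).circ i (j + 1) := congrArg Prod.snd he
    have hu1' : u' = (Fig m).circ i' j' := congrArg Prod.fst he'
    have hv1' : v = (Fig m).circ i' (j' + 1) := congrArg Prod.snd he'
    have hjl : j + 1 < (Fig m).len i := by
      rcases Nat.lt_or_ge (j + 1) ((Fig m).len i) with h | h
      · exact h
      · exfalso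
        have : j + 1 = (Fig m).len i := by omega
        exact hv (by rw [hv1, this, (Fig m).close])
    have hjl' : j' + 1 < (Fig m).len i' := by
      rcases Nat.lt_or_ge (j' + 1) ((Fig m).len i') with h | h
      · exact h
      · exfalso
        have : j' + 1 = (Fig m).len i' := by omega
        exact hv (by rw [hv1', this, (Fig m).close])
    have hii : i = i' := by
      by_contra hne
      exact hv (by
        rw [hv1]
        exact (Fig m).disj i i' hne (j + 1) hjl (j' + 1) hjl' (hv1.symm.trans hv1'))
    subst hii
    have hjj : j + 1 = j' + 1 :=
      (Fig m).inj i (j + 1) hjl (j' + 1) hjl' (hv1.symm.trans hv1')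
    have : j = j' := by omega
    subst this
    rw [hu1, hu1']
  -- a choice of predecessor at every level
  set p : ∀ k, V k := fun k => Classical.choose (hsurj k (x.1 k)).1 with hp_def
  have pE : ∀ k, (p k, x.1 k) ∈ E k := fun k => Classical.choose_spec (hsurj k (x.1 k)).1
  have hφp : ∀ m, M ≤ m → φ (m + 1) (p (m + 2)) = p (m + 1) := by
    intro m hm
    apply pu m (x.1 (m + 1)) (hnc m hm)
    · have := hhom (m + 1) (p (m + 2)) (x.1 (m + 2)) (pE (m + 2))
      rwa [x.2 (m + 1)] at this
    · exact pE (m + 1)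
  set N := M + 1 with hN
  -- pushing any compatible sequence down
  have down_x : ∀ (z : {x : ∀ n, V n // ∀ n, φ n (x (n + 1)) = x n}),
      ∀ n m (h : m ≤ n), downMap φ n m h (z.1 n) = z.1 m := by
    intro z n
    induction n with
    | zero =>
      intro m h
      obtain rfl : m = 0 := Nat.le_zero.mp h
      rw [downMap_self]
    | succ k ih =>
      intro m h
      by_cases hm : m = k + 1
      · subst hm; rw [downMap_self]
      · rw [downMap_step φ k m (by omega), z.2 k, ih m (by omega)]
  -- edges map down
  have down_edge : ∀ n m (h : m ≤ n) (a b : V n), (a, b) ∈ E n →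
      (downMap φ n m h a, downMap φ n m h b) ∈ E m := by
    intro n
    induction n with
    | zero =>
      intro m h a b hab
      obtain rfl : m = 0 := Nat.le_zero.mp h
      rw [downMap_self, downMap_self]; exact hab
    | succ k ih =>
      intro m h a b hab
      by_cases hm : m = k + 1
      · subst hm; rw [downMap_self, downMap_self]; exact hab
      · rw [downMap_step φ k m (by omega), downMap_step φ k m (by omega)]
        exact ih m (by omega) _ _ (hhom k a b hab)
  -- stability of the downward images of the chosen predecessors
  have stab : ∀ n k (h : max n N ≤ k),
      downMap φ k n (by omega) (p k)
        = downMap φ (max n N) n (le_max_left n N) (p (max n N)) := by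
    intro n k h
    induction k, h using Nat.le_induction with
    | base => rfl
    | succ k hk ih =>
      obtain ⟨m, rfl⟩ : ∃ m, k = m + 1 := ⟨k - 1, by omega⟩
      rw [downMap_step φ (m + 1) n (by omega), hφp m (by omega)]
      exact ih
  refine ⟨⟨fun n => downMap φ (max n N) n (le_max_left n N) (p (max n N)), ?_⟩, ?_, ?_⟩
  · -- compatibility
    intro n
    have h1 : n + 1 ≤ max (n + 1) N := le_max_left _ _
    rw [downMap_comm φ (max (n + 1) N) n h1 (by omega)]
    exact stab n (max (n + 1) N) (by omega)
  · -- edges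
    intro n
    have he := down_edge (max n N) n (le_max_left n N) _ _ (pE (max n N))
    rwa [down_x x (max n N) n (le_max_left n N)] at he
  · -- uniqueness
    intro z hz
    apply Subtype.ext
    funext n
    show z.1 n = downMap φ (max n N) n (le_max_left n N) (p (max n N))
    have hK : N ≤ max n N := le_max_right n N
    obtain ⟨m, hmK⟩ : ∃ m, max n N = m + 1 := ⟨max n N - 1, by omega⟩
    have hzp : z.1 (max n N) = p (max n N) := by
      rw [hmK] at hK ⊢
      exact pu m (x.1 (m + 1)) (hnc m (by omega)) _ _ (by rw [← hmK]; exact hmK ▸ hz (m + 1)) (pE (m + 1))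
    rw [← down_x z (max n N) n (le_max_left n N), hzp]
end

section
/- Let G₀ ← G₁ ← ⋯ be a KR-covering of finite rank K (so lₙ ≤ K circuits at level n for infinitely many n, with limsup lₙ = K), with inverse limit (X,f), and let x₀ be the sequence of central vertices. Then #f⁻¹(x₀) ≤ K. -/
/-- In the inverse limit `(X, f)` of a KR-covering of finite rank `K` (so that
`lₙ ≤ K` for infinitely many `n`), the fiber of `f` over the sequence `x₀` of
central vertices has at most `K` elements. -/
theorem kr_covering_fiber_card_le_rank
    (V : ℕ → Type) [∀ n, Fintype (V n)] [∀ n, Nonempty (V n)]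
    (E : ∀ n, Set (V n × V n)) (φ : ∀ n, V (n + 1) → V n)
    (h0 : ∀ a b : V 0, a = b) (hloop : ∀ v : V 0, (v, v) ∈ E 0)
    (hsurj : ∀ n (v : V n), (∃ u, (u, v) ∈ E n) ∧ ∃ w, (v, w) ∈ E n)
    (hhom : ∀ n (u v : V (n + 1)), (u, v) ∈ E (n + 1) → (φ n u, φ n v) ∈ E n)
    (hp : ∀ n (u v v' : V (n + 1)),
      (u, v) ∈ E (n + 1) → (u, v') ∈ E (n + 1) → φ n v = φ n v')
    (hes : ∀ n (a b : V n), (a, b) ∈ E n →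
      ∃ u v : V (n + 1), (u, v) ∈ E (n + 1) ∧ φ n u = a ∧ φ n v = b)
    (Fig : ∀ n, GenFig8 (V (n + 1)) (E (n + 1)))
    (hcenter : ∀ n, φ (n + 1) (Fig (n + 1)).center = (Fig n).center)
    (K : ℕ) (hK : ∃ᶠ n in Filter.atTop, (Fig n).l ≤ K)
    (x₀ : {x : ∀ n, V n // ∀ n, φ n (x (n + 1)) = x n})
    (hx₀ : ∀ n, x₀.1 (n + 1) = (Fig n).center) :
    ∀ S : Finset {x : ∀ n, V n // ∀ n, φ n (x (n + 1)) = x n},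
      (∀ y ∈ S, ∀ n, (y.1 n, x₀.1 n) ∈ E n) → S.card ≤ K := by

  intro S hS
  by_contra hcard
  push_neg at hcard
  -- For each level, each point of the fiber is the unique predecessor of the
  -- center on some circuit.
  have hidx : ∀ n, ∀ y ∈ S, ∃ i : Fin (Fig n).l,
      y.1 (n + 1) = (Fig n).circ i ((Fig n).len i - 1) := by
    intro n y hy
    have hedge : (y.1 (n + 1), (Fig n).center) ∈ E (n + 1) := by
      rw [← hx₀ n]; exact hS y hy (n + 1)
    obtain ⟨i, j, hj, he⟩ := (Fig n).cover _ hedge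
    have he1 : y.1 (n + 1) = (Fig n).circ i j := congrArg Prod.fst he
    have he2 : (Fig n).center = (Fig n).circ i (j + 1) := congrArg Prod.snd he
    have hju : j + 1 = (Fig n).len i := by
      rcases lt_or_eq_of_le (Nat.succ_le_of_lt hj) with h | h
      · have h0 : (Fig n).circ i (j + 1) = (Fig n).circ i 0 := by
          rw [(Fig n).start, ← he2]
        have := (Fig n).inj i (j + 1) h 0 ((Fig n).len_pos i) h0
        omega
      · exact h
    refine ⟨i, ?_⟩
    rw [he1]
    congr 1
    omega
  -- At each level with few circuits, two distinct points of S agree.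
  have hpair : ∀ n, (Fig n).l ≤ K → ∃ y y' : {z // z ∈ S}, y ≠ y' ∧
      y.1.1 (n + 1) = y'.1.1 (n + 1) := by
    intro n hn
    have hcard' : Fintype.card (Fin (Fig n).l) < Fintype.card {z // z ∈ S} := by
      rw [Fintype.card_fin, Fintype.card_coe]
      omega
    obtain ⟨a, b, hab, hfab⟩ := Fintype.exists_ne_map_eq_of_card_lt
      (fun y : {z // z ∈ S} => (hidx n y.1 y.2).choose) hcard'
    refine ⟨a, b, hab, ?_⟩
    rw [(hidx n a.1 a.2).choose_spec, (hidx n b.1 b.2).choose_spec, hfab]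
  -- The set of good levels is infinite.
  have hT : {n | (Fig n).l ≤ K}.Infinite := by
    rwa [Nat.frequently_atTop_iff_infinite] at hK
  haveI : Infinite {n // (Fig n).l ≤ K} := hT.to_subtype
  -- Pigeonhole: a single pair agrees at infinitely many levels.
  let g : {n // (Fig n).l ≤ K} → {z // z ∈ S} × {z // z ∈ S} :=
    fun t => ((hpair t.1 t.2).choose, (hpair t.1 t.2).choose_spec.choose)
  have hg : ∀ t, (g t).1 ≠ (g t).2 ∧ (g t).1.1.1 (t.1 + 1) = (g t).2.1.1 (t.1 + 1) :=
    fun t => (hpair t.1 t.2).choose_spec.choose_spec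
  obtain ⟨q, hq⟩ := Finite.exists_infinite_fiber g
  have hfib : ((fun t => t.1) '' (g ⁻¹' {q})).Infinite :=
    (Set.infinite_coe_iff.mp hq).image (fun a _ b _ hab => Subtype.ext hab)
  obtain ⟨t0, ht0⟩ := hq.nonempty
  have hqne : q.1 ≠ q.2 := by
    have := hg t0
    rw [Set.mem_preimage, Set.mem_singleton_iff] at ht0
    rw [ht0] at this
    exact this.1
  -- descent: agreement at a level propagates downwards
  have desc : ∀ (y y' : {x : ∀ n, V n // ∀ n, φ n (x (n + 1)) = x n}) (a d : ℕ),
      y.1 (a + d) = y'.1 (a + d) → y.1 a = y'.1 a := by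
    intro y y' a d
    induction d with
    | zero => exact fun h => h
    | succ d ih =>
      intro h
      apply ih
      rw [← y.2 (a + d), ← y'.2 (a + d)]
      exact congrArg (φ (a + d)) h
  -- the two points of the pair are equal: contradiction.
  apply hqne
  ext n
  · obtain ⟨m, hm, hmn⟩ := hfib.exists_gt n
    obtain ⟨t, ht, htm⟩ := hm
    rw [Set.mem_preimage, Set.mem_singleton_iff] at ht
    have hagree : q.1.1.1 (t.1 + 1) = q.2.1.1 (t.1 + 1) := by
      have := (hg t).2
      rwa [ht] at this
    have htm' : (t : ℕ) = m := htm
    have hle : n ≤ t.1 + 1 := by omega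
    have := desc q.1.1 q.2.1 n (t.1 + 1 - n) (by
      rw [Nat.add_sub_cancel' hle]; exact hagree)
    exact this
end

section
/- Let 𝒢 be a covering G₀ ← G₁ ← ⋯ with inverse limit (X,f) = (V_𝒢, E_𝒢), and suppose that for all n ≥ 0 there exists m > n such that the walk image under φ_{m,n} of every circuit of G_m visits every vertex of Gₙ, i.e. V(φ_{m,n}(c)) = V(Gₙ) for every circuit c of G_m. Then for every x ∈ X, every n, and every vertex v ∈ Vₙ, the forward orbit of x meets the clopen set U(v). -/
/-- The composite cover map `φ_{n+k, n} = φₙ ∘ ⋯ ∘ φ_{n+k-1}`. -/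
def phiIter (V : ℕ → Type) (φ : ∀ n, V (n + 1) → V n) (n : ℕ) :
    ∀ k : ℕ, V (n + k) → V n
  | 0 => id
  | k + 1 => fun x => phiIter V φ n k (φ (n + k) x)

/-- `c` is a circuit of length `L` in the graph `(V m, E m)`: a closed walk through
pairwise distinct vertices except that its start equals its end. -/
def IsCircuit {W : Type} (E : Set (W × W)) (L : ℕ) (c : ℕ → W) : Prop :=
  0 < L ∧ c L = c 0 ∧ (∀ j < L, (c j, c (j + 1)) ∈ E) ∧
    ∀ j < L, ∀ j' < L, c j = c j' → j = j'


lemma phiIter_compat (V : ℕ → Type) (φ : ∀ n, V (n + 1) → V n)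
    (x : ∀ n, V n) (hx : ∀ n, φ n (x (n + 1)) = x n) (n k : ℕ) :
    phiIter V φ n k (x (n + k)) = x n := by
  induction k with
  | zero => rfl
  | succ k ih =>
      show phiIter V φ n k (φ (n + k) (x (n + k + 1))) = x n
      rw [hx (n + k)]; exact ih

/-- If in a covering, for every `n` there is `m > n` such that the `φ_{m,n}`-image
of every circuit of `G_m` visits every vertex of `Gₙ`, then every forward orbit in
the inverse limit meets every set `U(v)`. -/
theorem invLimit_orbits_dense_of_circuit_condition
    (V : ℕ → Type) [∀ n, Fintype (V n)] [∀ n, Nonempty (V n)]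
    (E : ∀ n, Set (V n × V n)) (φ : ∀ n, V (n + 1) → V n)
    (h0 : ∀ a b : V 0, a = b) (hloop : ∀ v : V 0, (v, v) ∈ E 0)
    (hsurj : ∀ n (v : V n), (∃ u, (u, v) ∈ E n) ∧ ∃ w, (v, w) ∈ E n)
    (hhom : ∀ n (u v : V (n + 1)), (u, v) ∈ E (n + 1) → (φ n u, φ n v) ∈ E n)
    (hp : ∀ n (u v v' : V (n + 1)),
      (u, v) ∈ E (n + 1) → (u, v') ∈ E (n + 1) → φ n v = φ n v')
    (hes : ∀ n (a b : V n), (a, b) ∈ E n →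
      ∃ u v : V (n + 1), (u, v) ∈ E (n + 1) ∧ φ n u = a ∧ φ n v = b)
    (hcirc : ∀ n, ∃ k, 0 < k ∧ ∀ (L : ℕ) (c : ℕ → V (n + k)),
      IsCircuit (E (n + k)) L c → ∀ v : V n, ∃ j ≤ L, phiIter V φ n k (c j) = v)
    (F : {x : ∀ n, V n // ∀ n, φ n (x (n + 1)) = x n} →
         {x : ∀ n, V n // ∀ n, φ n (x (n + 1)) = x n})
    (hF : ∀ x n, (x.1 n, (F x).1 n) ∈ E n) :
    ∀ x : {x : ∀ n, V n // ∀ n, φ n (x (n + 1)) = x n}, ∀ n (v : V n),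
      ∃ t : ℕ, (F^[t] x).1 n = v := by
  classical
  intro x n v
  obtain ⟨k, hk, hc⟩ := hcirc n
  set y : ℕ → V (n + k) := fun t => (F^[t] x).1 (n + k) with hy
  have hedge : ∀ t, (y t, y (t + 1)) ∈ E (n + k) := by
    intro t
    have h := hF (F^[t] x) (n + k)
    simpa [hy, Function.iterate_succ_apply'] using h
  obtain ⟨t1, t2, hne, heq⟩ := Finite.exists_ne_map_eq_of_infinite y
  have hD : ∃ d, 0 < d ∧ ∃ a, y a = y (a + d) := by
    rcases lt_or_gt_of_ne hne with h | h
    · exact ⟨t2 - t1, by omega, t1, by rw [heq]; congr 1; omega⟩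
    · exact ⟨t1 - t2, by omega, t2, by rw [← heq]; congr 1; omega⟩
  obtain ⟨hL, a, ha⟩ := Nat.find_spec hD
  set L := Nat.find hD with hLdef
  have hmin : ∀ d, d < L → ¬(0 < d ∧ ∃ a, y a = y (a + d)) :=
    fun d hd => Nat.find_min hD hd
  have hcirc' : IsCircuit (E (n + k)) L (fun j => y (a + j)) := by
    refine ⟨hL, by simpa using ha.symm, fun j hj => ?_, ?_⟩
    · have h := hedge (a + j)
      simpa [add_assoc] using h
    · intro j hj j' hj' hjj
      have hjj2 : y (a + j) = y (a + j') := hjj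
      by_contra hne'
      rcases lt_or_gt_of_ne hne' with h | h
      · exact hmin (j' - j) (by omega) ⟨by omega, a + j, by rw [hjj2]; congr 1; omega⟩
      · exact hmin (j - j') (by omega) ⟨by omega, a + j', by rw [← hjj2]; congr 1; omega⟩
  obtain ⟨j, hjL, hj⟩ := hc L _ hcirc' v
  refine ⟨a + j, ?_⟩
  have h2 := phiIter_compat V φ (F^[a + j] x).1 (F^[a + j] x).2 n k
  rw [← h2]; exact hj
end
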